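/- arXiv:2503.19206 — 3 statements merged into one kernel-verified Lean document; each statement's English description precedes it below -/
import Mathlib

section
/- Fix 0 ≤ n ≤ d and assume that for every 1 ≤ i ≤ n one has (λ + 2)·η·(2·max{σ_i, σ^ft_i} + λ + λ√(σ_i)/√(σ^ft_i)) < 1. Let (Ŵ₁(k), Ŵ₂(k))_{k≥0} be generated by iterating the infinite-batch fine-tuning update with anchor θ₀ = W̄₁ⁿ·W̄₂ⁿ, starting from (Ŵ₁(0), Ŵ₂(0)) = (W̄₁ⁿ, W̄₂ⁿ). Then for every k ≥ 0, ‖Ŵ₁(k)‖_op ≤ √Γ and ‖Ŵ₂(k)‖_op ≤ √Γ. -/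
open Matrix

open scoped Matrix.Norms.L2Operator

/-- The one-dimensional fine-tuning map `f(x; η, λ, σ, σ₀) = x + 2ηx(σ² − x²) + 2ηλx(σ₀² − x²)`. -/
noncomputable def fstep (η lam s s0 x : ℝ) : ℝ :=
  x + 2 * η * x * (s ^ 2 - x ^ 2) + 2 * η * lam * x * (s0 ^ 2 - x ^ 2)

/-- The diagonal matrix `(Σ_{:n})^{1/2}`: square roots of the first `n` singular values. -/
noncomputable def sqrtTrunc {d : ℕ} (σ : Fin d → ℝ) (n : ℕ) : Matrix (Fin d) (Fin d) ℝ :=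
  Matrix.diagonal fun i => if (i : ℕ) < n then Real.sqrt (σ i) else 0

/-- The ideal stage-`n` checkpoint `W̄₁ⁿ = U (Σ_{:n})^{1/2}`. -/
noncomputable def W1bar {d : ℕ} (U : Matrix (Fin d) (Fin d) ℝ) (σ : Fin d → ℝ) (n : ℕ) :
    Matrix (Fin d) (Fin d) ℝ :=
  U * sqrtTrunc σ n

/-- The ideal stage-`n` checkpoint `W̄₂ⁿ = (Σ_{:n})^{1/2} Vᵀ`. -/
noncomputable def W2bar {d : ℕ} (V : Matrix (Fin d) (Fin d) ℝ) (σ : Fin d → ℝ) (n : ℕ) :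
    Matrix (Fin d) (Fin d) ℝ :=
  sqrtTrunc σ n * Vᵀ

/-- One finite-batch fine-tuning update with covariance `S`, target `A^ft`, anchor `θ₀`,
learning rate `η` and regularization `λ`.  The infinite-batch update is the case `S = 1`. -/
noncomputable def ftStep {d : ℕ} (η lam : ℝ) (Aft θ₀ S : Matrix (Fin d) (Fin d) ℝ)
    (W : Matrix (Fin d) (Fin d) ℝ × Matrix (Fin d) (Fin d) ℝ) :
    Matrix (Fin d) (Fin d) ℝ × Matrix (Fin d) (Fin d) ℝ :=
  (W.1 - (2 * η) • ((W.1 * W.2 - Aft) * S * W.2ᵀ)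
      - (2 * η * lam) • ((W.1 * W.2 - θ₀) * W.2ᵀ),
   W.2 - (2 * η) • (W.1ᵀ * S * (W.1 * W.2 - Aft))
      - (2 * η * lam) • (W.1ᵀ * (W.1 * W.2 - θ₀)))

set_option maxHeartbeats 1000000 in
/-- Algebraic core of the scalar invariance lemma, over opaque reals. -/
lemma scalar_core (η lam s f x p m r a b c : ℝ) (hη : 0 < η) (hlam : 0 ≤ lam)
    (hs : 0 < s) (hf : 0 < f) (hm : 0 < m) (hsm : s ≤ m) (hfm : f ≤ m) (hmax : m = s ∨ m = f)
    (hr0 : 0 ≤ r) (hr2 : r^2 = m) (ha0 : 0 < a) (ha2 : a^2 = s) (hb0 : 0 < b) (hb2 : b^2 = f)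
    (hp0 : 0 ≤ p) (hp2 : (1+lam)*p^2 = f + lam*s) (hcdef : c = 2*η*(1+lam))
    (hmc : (lam+2)*η*(2*m) < 1)
    (h0 : 0 ≤ x) (h1 : x ≤ r) (h2 : |x - p| ≤ |a - p|) :
    0 ≤ x + c*x*(p^2 - x^2) ∧ x + c*x*(p^2 - x^2) ≤ r ∧
      |x + c*x*(p^2 - x^2) - p| ≤ |a - p| := by
  have hlam1 : (0:ℝ) < 1 + lam := by linarith
  have hc : 0 < c := by rw [hcdef]; positivity
  have hcm : c*m < 1 := by
    have h' : c*m = 2*(η*m) + 2*(lam*(η*m)) := by rw [hcdef]; ring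
    have h'' : (lam+2)*η*(2*m) = 4*(η*m) + 2*(lam*(η*m)) := by ring
    have := mul_pos hη hm
    linarith
  have hlsm : lam*s ≤ lam*m := mul_le_mul_of_nonneg_left hsm hlam
  have hp2m : p^2 ≤ m := by
    have h1' : (1+lam)*p^2 ≤ (1+lam)*m := by linarith
    exact le_of_mul_le_mul_left h1' hlam1
  have hpm : p ≤ r := le_of_pow_le_pow_left₀ two_ne_zero hr0 (by linarith)
  have ham : a ≤ r := le_of_pow_le_pow_left₀ two_ne_zero hr0 (by linarith)
  have hx2 : x^2 ≤ m := by
    have h' := mul_self_le_mul_self h0 h1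
    linarith [h', hr2]
  have hF : 0 ≤ 1 + c*(p^2 - x^2) := by
    have h3 := mul_le_mul_of_nonneg_left hx2 hc.le
    have h4 := mul_nonneg hc.le (sq_nonneg p)
    have h5 : c*(p^2 - x^2) = c*p^2 - c*x^2 := by ring
    linarith
  have part1 : 0 ≤ x + c*x*(p^2 - x^2) := by
    have h6 := mul_nonneg h0 hF
    linarith [h6]
  have hfac : x + c*x*(p^2 - x^2) - p = (x - p)*(1 - c*x*(x+p)) := by ring
  have ht0 : 0 ≤ c*x*(x+p) := by positivity
  have hxxp : x*(x+p) ≤ 2*m := by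
    have h7 := mul_le_mul h1 (by linarith : x + p ≤ r + r) (by linarith : (0:ℝ) ≤ x + p) hr0
    linarith [h7, hr2]
  have ht2 : c*x*(x+p) ≤ 2 := by
    have h8 := mul_le_mul_of_nonneg_left hxxp hc.le
    linarith [h8, hcm]
  have part3 : |x + c*x*(p^2 - x^2) - p| ≤ |a - p| := by
    calc |x + c*x*(p^2 - x^2) - p| = |x - p| * |1 - c*x*(x+p)| := by rw [hfac, abs_mul]
    _ ≤ |x - p| * 1 := by
        apply mul_le_mul_of_nonneg_left _ (abs_nonneg _)
        rw [abs_le]; constructor <;> linarith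
    _ ≤ |a - p| := by rw [mul_one]; exact h2
  refine ⟨part1, ?_, part3⟩
  rcases le_or_gt p x with hpx | hxp
  · -- decreasing regime
    have h9 := mul_self_le_mul_self hp0 hpx
    have h10 : 0 ≤ c*x*(x^2 - p^2) := mul_nonneg (mul_nonneg hc.le h0) (by linarith [h9])
    linarith [h10, h1]
  · rcases le_or_gt p a with hpa | hap
    · -- band is inside [2p - a, a]
      have hle : x + c*x*(p^2 - x^2) - p ≤ |a - p| := le_trans (le_abs_self _) part3
      rw [abs_of_nonneg (by linarith)] at hle
      linarith
    · -- a < p : overshoot analysis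
      have hap2 : a^2 < p^2 := by
        have h' := mul_self_lt_mul_self ha0.le hap
        linarith [h']
      have ha2' : lam*(a^2) = lam*s := by rw [ha2]
      have hsf : s < f := by
        have h11 := mul_lt_mul_of_pos_left hap2 hlam1
        linarith [h11, hp2, ha2', ha2]
      have hmf : m = f := by
        rcases hmax with h | h
        · exfalso; rw [h] at hfm; linarith
        · exact h
      have hrb : r = b :=
        le_antisymm (le_of_pow_le_pow_left₀ two_ne_zero hb0.le (by linarith))
          (le_of_pow_le_pow_left₀ two_ne_zero hr0 (by linarith))
      have hpb : p ≤ b := by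
        apply le_of_pow_le_pow_left₀ two_ne_zero hb0.le
        have h12 : lam*s ≤ lam*f := mul_le_mul_of_nonneg_left hsf.le hlam
        have hb2' : lam*(b^2) = lam*f := by rw [hb2]
        have h13 : (1+lam)*p^2 ≤ (1+lam)*b^2 := by linarith [hp2, h12, hb2, hb2']
        exact le_of_mul_le_mul_left h13 hlam1
      have hpxa : p - x ≤ p - a := by
        have h2' : |x - p| ≤ p - a := by
          rw [abs_of_nonpos (by linarith : a - p ≤ 0)] at h2; linarith
        have h3' : p - x ≤ |x - p| := by
          rw [abs_sub_comm]; exact le_abs_self _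
        linarith
      have hover : x + c*x*(p^2 - x^2) - p ≤ (p - x)*(2*(c*p^2) - 1) := by
        rw [hfac]
        have h14 := mul_le_mul hxp.le (by linarith : x + p ≤ p + p) (by linarith) hp0
        have hxx : c*x*(x+p) ≤ 2*(c*p^2) := by
          have h15 := mul_le_mul_of_nonneg_left h14 hc.le
          linarith [h15]
        have hmm := mul_le_mul_of_nonneg_left
          (by linarith : c*x*(x+p) - 1 ≤ 2*(c*p^2) - 1) (by linarith : (0:ℝ) ≤ p - x)
        linarith [hmm]
      rcases le_or_gt (2*(c*p^2) - 1) 0 with hneg | hposu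
      · have hle2 : x + c*x*(p^2 - x^2) - p ≤ 0 :=
          le_trans hover (mul_nonpos_of_nonneg_of_nonpos (by linarith) hneg)
        rw [hrb]; linarith
      · have hcp : c*p^2 = 2*η*f + 2*η*(lam*s) := by
          rw [hcdef]; linear_combination (2*η)*hp2
        have hup' : (lam+2)*(2*(c*p^2)) < 2*(1+lam) := by
          have h16 : 2*η*f ≤ 2*η*m := by
            have := mul_le_mul_of_nonneg_left hfm (by positivity : (0:ℝ) ≤ 2*η); linarith
          have h17 : 2*η*(lam*s) ≤ 2*η*(lam*m) := by
            have := mul_le_mul_of_nonneg_left hlsm (by positivity : (0:ℝ) ≤ 2*η); linarith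
          have hsum : c*p^2 ≤ 2*η*m + 2*η*(lam*m) := by linarith
          have h18 := mul_le_mul_of_nonneg_left hsum
            (by positivity : (0:ℝ) ≤ 2*(lam+2))
          have h19 := mul_lt_mul_of_pos_left hmc (by linarith : (0:ℝ) < 2*(1+lam))
          linarith [h18, h19]
        have hba : a ≤ b := le_of_pow_le_pow_left₀ two_ne_zero hb0.le (by linarith)
        have hq : ((lam+2)*b + lam*a)^2 - (2*(1+lam)*p)^2
            = lam*(b-a)*(lam*(b+a)+(2*lam+4)*a) := by
          linear_combination (-4*(1+lam))*hp2 + (4*(1+lam))*hb2 + (4*(1+lam)*lam)*ha2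
        have hrhs : (0:ℝ) ≤ lam*(b-a)*(lam*(b+a)+(2*lam+4)*a) := by
          apply mul_nonneg (mul_nonneg hlam (by linarith)); positivity
        have hXY : 2*(1+lam)*p ≤ (lam+2)*b + lam*a :=
          le_of_pow_le_pow_left₀ two_ne_zero (by positivity) (by linarith)
        have h5 : (lam+2)*(2*(c*p^2) - 1) ≤ lam := by linarith
        have h6 := mul_le_mul_of_nonneg_right h5 (by linarith : (0:ℝ) ≤ p - a)
        have h8 : (p - a)*(2*(c*p^2) - 1) ≤ b - p := by
          apply le_of_mul_le_mul_left _ (by linarith : (0:ℝ) < lam+2)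
          linarith [h6, hXY]
        have h7 : (p - x)*(2*(c*p^2) - 1) ≤ (p - a)*(2*(c*p^2) - 1) :=
          mul_le_mul_of_nonneg_right hpxa hposu.le
        rw [hrb]; linarith

/-- Key scalar invariance lemma. -/
lemma scalar_step (η lam s f x p : ℝ) (hη : 0 < η) (hlam : 0 ≤ lam) (hs : 0 < s) (hf : 0 < f)
    (hp : p = Real.sqrt ((f + lam*s)/(1+lam)))
    (hcond : (lam+2)*η*(2*max s f + lam + lam*Real.sqrt s/Real.sqrt f) < 1)
    (h0 : 0 ≤ x) (h1 : x ≤ Real.sqrt (max s f)) (h2 : |x - p| ≤ |Real.sqrt s - p|) :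
    0 ≤ x + 2*η*x*(f - x^2) + 2*η*lam*x*(s - x^2)
    ∧ x + 2*η*x*(f - x^2) + 2*η*lam*x*(s - x^2) ≤ Real.sqrt (max s f)
    ∧ |x + 2*η*x*(f - x^2) + 2*η*lam*x*(s - x^2) - p| ≤ |Real.sqrt s - p| := by
  have hm : 0 < max s f := lt_of_lt_of_le hs (le_max_left _ _)
  have hlam1 : (0:ℝ) < 1 + lam := by linarith
  have hp2 : (1+lam)*p^2 = f + lam*s := by
    rw [hp, Real.sq_sqrt (by positivity)]; field_simp
  have hmc : (lam+2)*η*(2*max s f) < 1 := by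
    have hab0 : (0:ℝ) ≤ lam * Real.sqrt s / Real.sqrt f := by positivity
    calc (lam+2)*η*(2*max s f)
        ≤ (lam+2)*η*(2*max s f + lam + lam*Real.sqrt s/Real.sqrt f) := by
          apply mul_le_mul_of_nonneg_left _ (by positivity); linarith
    _ < 1 := hcond
  have hkey := scalar_core η lam s f x p (max s f) (Real.sqrt (max s f)) (Real.sqrt s)
    (Real.sqrt f) (2*η*(1+lam)) hη hlam hs hf hm (le_max_left _ _) (le_max_right _ _)
    (max_choice s f) (Real.sqrt_nonneg _) (Real.sq_sqrt hm.le) (Real.sqrt_pos.2 hs)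
    (Real.sq_sqrt hs.le) (Real.sqrt_pos.2 hf) (Real.sq_sqrt hf.le)
    (hp ▸ Real.sqrt_nonneg _) hp2 rfl hmc h0 h1 h2
  have hrw : x + 2*η*(1+lam)*x*(p^2 - x^2)
      = x + 2*η*x*(f - x^2) + 2*η*lam*x*(s - x^2) := by
    linear_combination (2*η*x) * hp2
  rw [hrw] at hkey
  exact hkey

lemma conjT_eq_transpose {d : ℕ} (A : Matrix (Fin d) (Fin d) ℝ) : Aᴴ = Aᵀ := by
  ext i j; simp [Matrix.conjTranspose_apply]

lemma norm_orth_mul {d : ℕ} (U A : Matrix (Fin d) (Fin d) ℝ) (hU : Uᵀ * U = 1) :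
    ‖U * A‖ = ‖A‖ := by
  have h1 : (U*A)ᴴ * (U*A) = Aᴴ * A := by
    rw [Matrix.conjTranspose_mul, conjT_eq_transpose U, Matrix.mul_assoc,
      ← Matrix.mul_assoc Uᵀ, hU, Matrix.one_mul]
  have h2 := Matrix.l2_opNorm_conjTranspose_mul_self (U*A)
  have h3 := Matrix.l2_opNorm_conjTranspose_mul_self A
  rw [h1, h3] at h2
  nlinarith [norm_nonneg (U*A), norm_nonneg A, h2]

lemma norm_diag_le {d : ℕ} (v : Fin d → ℝ) (r : ℝ) (hr : 0 ≤ r) (h : ∀ i, |v i| ≤ r) :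
    ‖(Matrix.diagonal v : Matrix (Fin d) (Fin d) ℝ)‖ ≤ r := by
  rw [Matrix.l2_opNorm_def]
  apply ContinuousLinearMap.opNorm_le_bound _ hr
  intro x
  have hx : ((Matrix.toEuclideanLin.trans LinearMap.toContinuousLinearMap)
      (Matrix.diagonal v)) x = Matrix.toEuclideanLin (Matrix.diagonal v) x := rfl
  rw [hx, Matrix.toEuclideanLin_apply]
  rw [EuclideanSpace.norm_eq, EuclideanSpace.norm_eq]
  rw [← Real.sqrt_sq hr, ← Real.sqrt_mul (sq_nonneg r)]
  apply Real.sqrt_le_sqrt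
  rw [Finset.mul_sum]
  apply Finset.sum_le_sum
  intro i _
  have hv : ((WithLp.equiv 2 (Fin d → ℝ)).symm
      ((Matrix.diagonal v) *ᵥ ((WithLp.equiv 2 (Fin d → ℝ)) x))) i
      = v i * ((WithLp.equiv 2 (Fin d → ℝ)) x) i := by
    simp [Matrix.mulVec_diagonal]
  erw [hv]
  have h1 : ‖v i * ((WithLp.equiv 2 (Fin d → ℝ)) x) i‖^2
      = (v i)^2 * ‖((WithLp.equiv 2 (Fin d → ℝ)) x) i‖^2 := by
    rw [norm_mul, mul_pow]
    congr 1
    rw [Real.norm_eq_abs, sq_abs]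
  have hxx : ((WithLp.equiv 2 (Fin d → ℝ)) x) i = x i := rfl
  rw [h1, hxx]
  apply mul_le_mul_of_nonneg_right _ (sq_nonneg _)
  calc (v i)^2 = |v i|^2 := (sq_abs _).symm
  _ ≤ r^2 := by
      apply pow_le_pow_left₀ (abs_nonneg _) (h i)

lemma ftStep_diag {d : ℕ} (η lam : ℝ) (U V : Matrix (Fin d) (Fin d) ℝ)
    (hU' : Uᵀ * U = 1) (hV' : Vᵀ * V = 1) (f t v : Fin d → ℝ) :
    ftStep η lam (U * Matrix.diagonal f * Vᵀ) (U * Matrix.diagonal t * Vᵀ) 1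
      (U * Matrix.diagonal v, Matrix.diagonal v * Vᵀ)
    = (U * Matrix.diagonal
        (fun i => v i + 2*η*(v i)*(f i - (v i)^2) + 2*η*lam*(v i)*(t i - (v i)^2)),
       Matrix.diagonal
        (fun i => v i + 2*η*(v i)*(f i - (v i)^2) + 2*η*lam*(v i)*(t i - (v i)^2)) * Vᵀ) := by
  set D := Matrix.diagonal v with hD
  set F := Matrix.diagonal f with hF
  set T := Matrix.diagonal t with hT
  have hVV : ∀ A B : Matrix (Fin d) (Fin d) ℝ, (U*A*Vᵀ)*(V*B) = U*(A*B) := by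
    intro A B
    calc (U*A*Vᵀ)*(V*B) = U*A*(Vᵀ*(V*B)) := by rw [Matrix.mul_assoc]
    _ = U*A*((Vᵀ*V)*B) := by rw [Matrix.mul_assoc Vᵀ]
    _ = U*(A*B) := by rw [hV', Matrix.one_mul, Matrix.mul_assoc]
  have hUU : ∀ A B : Matrix (Fin d) (Fin d) ℝ, (A*Uᵀ)*(U*B*Vᵀ) = (A*B)*Vᵀ := by
    intro A B
    calc (A*Uᵀ)*(U*B*Vᵀ) = (A*Uᵀ)*(U*(B*Vᵀ)) := by rw [Matrix.mul_assoc U]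
    _ = A*(Uᵀ*(U*(B*Vᵀ))) := by rw [Matrix.mul_assoc]
    _ = A*((Uᵀ*U)*(B*Vᵀ)) := by rw [← Matrix.mul_assoc Uᵀ]
    _ = (A*B)*Vᵀ := by rw [hU', Matrix.one_mul, Matrix.mul_assoc]
  have hθ : (U*D)*(D*Vᵀ) = U*(D*D)*Vᵀ := by
    rw [Matrix.mul_assoc U D, ← Matrix.mul_assoc D D, ← Matrix.mul_assoc]
  have hsub1 : U*(D*D)*Vᵀ - U*F*Vᵀ = U*(D*D - F)*Vᵀ := by
    rw [Matrix.mul_sub, Matrix.sub_mul]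
  have hsub2 : U*(D*D)*Vᵀ - U*T*Vᵀ = U*(D*D - T)*Vᵀ := by
    rw [Matrix.mul_sub, Matrix.sub_mul]
  have hW2T : (D*Vᵀ)ᵀ = V*D := by
    rw [Matrix.transpose_mul, Matrix.transpose_transpose, hD, Matrix.diagonal_transpose]
  have hW1T : (U*D)ᵀ = D*Uᵀ := by
    rw [Matrix.transpose_mul, hD, Matrix.diagonal_transpose]
  have hdiag : D - (2*η) • ((D*D - F)*D) - (2*η*lam) • ((D*D - T)*D)
      = Matrix.diagonal
        (fun i => v i + 2*η*(v i)*(f i - (v i)^2) + 2*η*lam*(v i)*(t i - (v i)^2)) := by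
    simp only [hD, hF, hT, Matrix.diagonal_mul_diagonal, Matrix.diagonal_sub,
      ← Matrix.diagonal_smul]
    refine congrArg Matrix.diagonal ?_
    funext i
    simp only [Pi.sub_apply, Pi.smul_apply, Pi.mul_apply, smul_eq_mul]
    ring
  simp only [ftStep, Matrix.mul_one]
  rw [Prod.mk.injEq]
  constructor
  · -- first component
    rw [hθ, hW2T, hsub1, hsub2, hVV, hVV]
    calc U*D - (2*η) • (U*((D*D - F)*D)) - (2*η*lam) • (U*((D*D - T)*D))
        = U*(D - (2*η) • ((D*D - F)*D) - (2*η*lam) • ((D*D - T)*D)) := by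
          rw [Matrix.mul_sub, Matrix.mul_sub, Matrix.mul_smul, Matrix.mul_smul]
    _ = _ := by rw [hdiag]
  · -- second component
    rw [hθ, hW1T, hsub1, hsub2, hUU, hUU]
    have hcomm1 : D*(D*D - F) = (D*D - F)*D := by
      simp only [hD, hF, Matrix.diagonal_mul_diagonal, Matrix.diagonal_sub]
      refine congrArg Matrix.diagonal ?_; funext i; ring
    have hcomm2 : D*(D*D - T) = (D*D - T)*D := by
      simp only [hD, hT, Matrix.diagonal_mul_diagonal, Matrix.diagonal_sub]
      refine congrArg Matrix.diagonal ?_; funext i; ring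
    calc D*Vᵀ - (2*η) • ((D*(D*D - F))*Vᵀ) - (2*η*lam) • ((D*(D*D - T))*Vᵀ)
        = (D - (2*η) • (D*(D*D - F)) - (2*η*lam) • (D*(D*D - T)))*Vᵀ := by
          rw [Matrix.sub_mul, Matrix.sub_mul, Matrix.smul_mul, Matrix.smul_mul]
    _ = _ := by rw [hcomm1, hcomm2, hdiag]

/-- The scalar diagonal sequence followed by the infinite-batch iterates. -/
noncomputable def xseq (η lam : ℝ) {d : ℕ} (f t : Fin d → ℝ) : ℕ → Fin d → ℝ
  | 0 => fun i => Real.sqrt (t i)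
  | (k+1) => fun i => xseq η lam f t k i
      + 2*η*(xseq η lam f t k i)*(f i - (xseq η lam f t k i)^2)
      + 2*η*lam*(xseq η lam f t k i)*(t i - (xseq η lam f t k i)^2)

/-- under the per-feature step-size condition, the infinite-batch fine-tuning
iterates started from the ideal stage-`n` checkpoint have operator norm at most `√Γ`. -/
theorem infinite_batch_iterates_well_conditioned {d : ℕ} (hd : 1 ≤ d)
    (U V : Matrix (Fin d) (Fin d) ℝ)
    (hU : U * Uᵀ = 1) (hU' : Uᵀ * U = 1) (hV : V * Vᵀ = 1) (hV' : Vᵀ * V = 1)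
    (σ : Fin d → ℝ) (hσpos : ∀ i, 0 < σ i) (hσanti : StrictAnti σ)
    (σft : Fin d → ℝ) (hσftpos : ∀ i, 0 < σft i)
    (Aft : Matrix (Fin d) (Fin d) ℝ) (hAft : Aft = U * Matrix.diagonal σft * Vᵀ)
    (Γ : ℝ) (hΓ : Γ = max (σ ⟨0, hd⟩) (Finset.univ.sup' ⟨⟨0, hd⟩, Finset.mem_univ _⟩ σft))
    (η lam : ℝ) (hη : 0 < η) (hlam : 0 ≤ lam)
    (n : ℕ) (hnd : n ≤ d)
    (hcond : ∀ i : Fin d, (i : ℕ) < n →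
      (lam + 2) * η * (2 * max (σ i) (σft i) + lam
        + lam * Real.sqrt (σ i) / Real.sqrt (σft i)) < 1)
    (θ₀ : Matrix (Fin d) (Fin d) ℝ) (hθ₀ : θ₀ = W1bar U σ n * W2bar V σ n) :
    ∀ k : ℕ,
      ‖((ftStep η lam Aft θ₀ 1)^[k] (W1bar U σ n, W2bar V σ n)).1‖ ≤ Real.sqrt Γ ∧
      ‖((ftStep η lam Aft θ₀ 1)^[k] (W1bar U σ n, W2bar V σ n)).2‖ ≤ Real.sqrt Γ := by
  intro k
  set tt : Fin d → ℝ := fun i => if (i : ℕ) < n then σ i else 0 with htt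
  have htt0 : ∀ i, 0 ≤ tt i := by
    intro i; rw [htt]; dsimp only
    split
    · exact (hσpos _).le
    · exact le_refl 0
  have hsq : sqrtTrunc σ n = Matrix.diagonal (fun i => Real.sqrt (tt i)) := by
    unfold sqrtTrunc
    refine congrArg Matrix.diagonal ?_
    funext i
    rw [htt]; dsimp only
    split
    · rfl
    · rw [Real.sqrt_zero]
  have hW1 : W1bar U σ n = U * Matrix.diagonal (fun i => Real.sqrt (tt i)) := by
    rw [W1bar, hsq]
  have hW2 : W2bar V σ n = Matrix.diagonal (fun i => Real.sqrt (tt i)) * Vᵀ := by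
    rw [W2bar, hsq]
  have hθ₀' : θ₀ = U * Matrix.diagonal tt * Vᵀ := by
    rw [hθ₀, hW1, hW2]
    calc U * Matrix.diagonal (fun i => Real.sqrt (tt i))
          * (Matrix.diagonal (fun i => Real.sqrt (tt i)) * Vᵀ)
        = U * (Matrix.diagonal (fun i => Real.sqrt (tt i))
            * Matrix.diagonal (fun i => Real.sqrt (tt i))) * Vᵀ := by
          rw [Matrix.mul_assoc U, ← Matrix.mul_assoc (Matrix.diagonal _),
            ← Matrix.mul_assoc]
    _ = U * Matrix.diagonal tt * Vᵀ := by
          rw [Matrix.diagonal_mul_diagonal]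
          have hss : (fun i => Real.sqrt (tt i) * Real.sqrt (tt i)) = tt := by
            funext i
            exact Real.mul_self_sqrt (htt0 i)
          rw [hss]
  have hiter : ∀ m : ℕ, (ftStep η lam Aft θ₀ 1)^[m] (W1bar U σ n, W2bar V σ n)
      = (U * Matrix.diagonal (xseq η lam σft tt m),
         Matrix.diagonal (xseq η lam σft tt m) * Vᵀ) := by
    intro m
    induction m with
    | zero => rw [Function.iterate_zero_apply, hW1, hW2]; rfl
    | succ m ih =>
        rw [Function.iterate_succ_apply', ih, hAft, hθ₀',
          ftStep_diag η lam U V hU' hV' σft tt (xseq η lam σft tt m)]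
        rfl
  have hbound : ∀ m i, |xseq η lam σft tt m i| ≤ Real.sqrt Γ := by
    intro m i
    by_cases hi : (i : ℕ) < n
    · have hti : tt i = σ i := by rw [htt]; simp [hi]
      have hinv : ∀ m, 0 ≤ xseq η lam σft tt m i ∧
          xseq η lam σft tt m i ≤ Real.sqrt (max (σ i) (σft i)) ∧
          |xseq η lam σft tt m i - Real.sqrt ((σft i + lam*(σ i))/(1+lam))|
            ≤ |Real.sqrt (σ i) - Real.sqrt ((σft i + lam*(σ i))/(1+lam))| := by
        intro m
        induction m with
        | zero =>
          refine ⟨Real.sqrt_nonneg _, ?_, ?_⟩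
          · show Real.sqrt (tt i) ≤ _
            rw [hti]; exact Real.sqrt_le_sqrt (le_max_left _ _)
          · show |Real.sqrt (tt i) - _| ≤ _
            rw [hti]
        | succ m ih =>
          obtain ⟨h0', h1', h2'⟩ := ih
          have hkey := scalar_step η lam (σ i) (σft i) (xseq η lam σft tt m i)
            (Real.sqrt ((σft i + lam*(σ i))/(1+lam))) hη hlam (hσpos i) (hσftpos i)
            rfl (hcond i hi) h0' h1' h2'
          have hstep : xseq η lam σft tt (m+1) i
              = xseq η lam σft tt m i
                + 2*η*(xseq η lam σft tt m i)*(σft i - (xseq η lam σft tt m i)^2)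
                + 2*η*lam*(xseq η lam σft tt m i)*(σ i - (xseq η lam σft tt m i)^2) := by
            simp only [xseq]
            rw [hti]
          rw [hstep]
          exact hkey
      obtain ⟨h0', h1', _⟩ := hinv m
      rw [abs_of_nonneg h0']
      refine le_trans h1' (Real.sqrt_le_sqrt ?_)
      rw [hΓ]
      apply max_le_max
      · exact hσanti.antitone (by simp [Fin.le_def])
      · exact Finset.le_sup' σft (Finset.mem_univ i)
    · have hz : ∀ m, xseq η lam σft tt m i = 0 := by
        intro m
        induction m with
        | zero =>
          show Real.sqrt (tt i) = 0
          rw [htt]; simp [hi]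
        | succ m ih =>
          simp only [xseq]
          rw [ih]; ring
      rw [hz m]
      simpa using Real.sqrt_nonneg Γ
  rw [hiter k]
  have hdn : ‖Matrix.diagonal (xseq η lam σft tt k)‖ ≤ Real.sqrt Γ :=
    norm_diag_le _ _ (Real.sqrt_nonneg _) (hbound k)
  constructor
  · rw [norm_orth_mul U _ hU']
    exact hdn
  · have h1 : (Matrix.diagonal (xseq η lam σft tt k) * Vᵀ)ᴴ
        = V * Matrix.diagonal (xseq η lam σft tt k) := by
      rw [conjT_eq_transpose, Matrix.transpose_mul, Matrix.transpose_transpose,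
        Matrix.diagonal_transpose]
    calc ‖Matrix.diagonal (xseq η lam σft tt k) * Vᵀ‖
        = ‖(Matrix.diagonal (xseq η lam σft tt k) * Vᵀ)ᴴ‖ :=
          (Matrix.l2_opNorm_conjTranspose _).symm
    _ = ‖V * Matrix.diagonal (xseq η lam σft tt k)‖ := by rw [h1]
    _ = ‖Matrix.diagonal (xseq η lam σft tt k)‖ := norm_orth_mul V _ hV'
    _ ≤ Real.sqrt Γ := hdn
end

section
/- Consider the unregularized (λ = 0) infinite-batch fine-tuning update. Let (W₁, W₂) and (V₁, V₂) be two well-conditioned pairs and set ε₀ = max{‖W₁ − V₁‖_op, ‖W₂ − V₂‖_op}. Let (W₁', W₂') and (V₁', V₂') be the results of one infinite-batch update applied to (W₁, W₂) and to (V₁, V₂), respectively. Then max{‖W₁' − V₁'‖_op, ‖W₂' − V₂'‖_op} ≤ (1 + 32·η·Γ)·ε₀. -/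
open Matrix

open scoped Matrix.Norms.L2Operator

lemma l2_norm_one_aux {d : ℕ} (hd : 1 ≤ d) : ‖(1 : Matrix (Fin d) (Fin d) ℝ)‖ = 1 := by
  haveI : Nonempty (Fin d) := ⟨⟨0, hd⟩⟩
  haveI : Nontrivial (EuclideanSpace ℝ (Fin d)) := inferInstance
  rw [Matrix.cstar_norm_def, _root_.map_one]
  exact norm_one

lemma l2_norm_orth_aux {d : ℕ} (hd : 1 ≤ d) (U : Matrix (Fin d) (Fin d) ℝ)
    (h : Uᵀ * U = 1) : ‖U‖ = 1 := by
  have h2 : ‖Uᴴ * U‖ = ‖U‖ * ‖U‖ := Matrix.l2_opNorm_conjTranspose_mul_self U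
  rw [Matrix.conjTranspose_eq_transpose_of_trivial, h, l2_norm_one_aux hd] at h2
  rcases mul_self_eq_one_iff.mp h2.symm with h1 | h1
  · exact h1
  · nlinarith [norm_nonneg U]

lemma l2_norm_diag_le_aux {d : ℕ} (v : Fin d → ℝ) (M : ℝ) (hM : 0 ≤ M)
    (h : ∀ i, |v i| ≤ M) : ‖Matrix.diagonal v‖ ≤ M := by
  rw [Matrix.l2_opNorm_def]
  refine ContinuousLinearMap.opNorm_le_bound _ hM fun x => ?_
  show ‖Matrix.toEuclideanLin (Matrix.diagonal v) x‖ ≤ M * ‖x‖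
  rw [EuclideanSpace.norm_eq, EuclideanSpace.norm_eq]
  have hco : ∀ i, (Matrix.toEuclideanLin (Matrix.diagonal v) x) i = v i * x i := by
    intro i
    simp [Matrix.toEuclideanLin_apply, Matrix.mulVec_diagonal]
  rw [show (M * Real.sqrt (∑ i, ‖x i‖ ^ 2)) = Real.sqrt (M^2 * ∑ i, ‖x i‖ ^ 2) by
    rw [Real.sqrt_mul (by positivity), Real.sqrt_sq hM]]
  apply Real.sqrt_le_sqrt
  rw [Finset.mul_sum]
  apply Finset.sum_le_sum
  intro i _
  rw [hco i]
  simp only [Real.norm_eq_abs, sq_abs]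
  have h1 : (v i)^2 ≤ M^2 := by nlinarith [abs_nonneg (v i), sq_abs (v i), h i]
  nlinarith [sq_nonneg (x i)]

lemma l2_mul_bound_aux {d : ℕ} (A B : Matrix (Fin d) (Fin d) ℝ) (a b : ℝ)
    (hA : ‖A‖ ≤ a) (hB : ‖B‖ ≤ b) (ha : 0 ≤ a) : ‖A * B‖ ≤ a * b :=
  le_trans (Matrix.l2_opNorm_mul A B) (mul_le_mul hA hB (norm_nonneg _) ha)

lemma l2_transpose_norm_aux {d : ℕ} (A : Matrix (Fin d) (Fin d) ℝ) : ‖Aᵀ‖ = ‖A‖ := by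
  rw [← Matrix.conjTranspose_eq_transpose_of_trivial]
  exact Matrix.l2_opNorm_conjTranspose A

lemma comp_bound_aux {d : ℕ} (η Γ ε₀ : ℝ) (hη : 0 < η) (hΓ : 0 < Γ) (hε : 0 ≤ ε₀)
    (E P Q R S : Matrix (Fin d) (Fin d) ℝ)
    (hE : ‖E‖ ≤ ε₀) (hP : ‖P‖ ≤ 4 * Γ * ε₀) (hQ : ‖Q‖ ≤ 4 * Γ * ε₀)
    (hR : ‖R‖ ≤ 4 * Γ * ε₀) (hS : ‖S‖ ≤ Γ * ε₀) :
    ‖E - (2 * η) • (P + Q + R - S)‖ ≤ (1 + 32 * η * Γ) * ε₀ := by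
  have h1 : ‖E - (2 * η) • (P + Q + R - S)‖ ≤ ‖E‖ + ‖(2 * η) • (P + Q + R - S)‖ :=
    norm_sub_le _ _
  have h2 : ‖(2 * η) • (P + Q + R - S)‖ = (2 * η) * ‖P + Q + R - S‖ := by
    rw [norm_smul, Real.norm_eq_abs, abs_of_pos (by linarith)]
  have h3 : ‖P + Q + R - S‖ ≤ ‖P‖ + ‖Q‖ + ‖R‖ + ‖S‖ := by
    calc ‖P + Q + R - S‖ ≤ ‖P + Q + R‖ + ‖S‖ := norm_sub_le _ _
    _ ≤ ‖P + Q‖ + ‖R‖ + ‖S‖ := by gcongr; exact norm_add_le _ _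
    _ ≤ ‖P‖ + ‖Q‖ + ‖R‖ + ‖S‖ := by gcongr; exact norm_add_le _ _
  nlinarith [norm_nonneg (P + Q + R - S)]

/-- the unregularized infinite-batch update is `(1 + 32ηΓ)`-Lipschitz (in
operator norm, componentwise) on well-conditioned pairs. -/
theorem infinite_batch_update_lipschitz {d : ℕ} (hd : 1 ≤ d)
    (U V : Matrix (Fin d) (Fin d) ℝ)
    (hU : U * Uᵀ = 1) (hU' : Uᵀ * U = 1) (hV : V * Vᵀ = 1) (hV' : Vᵀ * V = 1)
    (σ : Fin d → ℝ) (hσpos : ∀ i, 0 < σ i) (hσanti : StrictAnti σ)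
    (σft : Fin d → ℝ) (hσftpos : ∀ i, 0 < σft i)
    (Aft : Matrix (Fin d) (Fin d) ℝ) (hAft : Aft = U * Matrix.diagonal σft * Vᵀ)
    (Γ : ℝ) (hΓ : Γ = max (σ ⟨0, hd⟩) (Finset.univ.sup' ⟨⟨0, hd⟩, Finset.mem_univ _⟩ σft))
    (η : ℝ) (hη : 0 < η)
    (W₁ W₂ V₁ V₂ : Matrix (Fin d) (Fin d) ℝ)
    (hW₁ : ‖W₁‖ ≤ 2 * Real.sqrt Γ) (hW₂ : ‖W₂‖ ≤ 2 * Real.sqrt Γ)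
    (hV₁ : ‖V₁‖ ≤ 2 * Real.sqrt Γ) (hV₂ : ‖V₂‖ ≤ 2 * Real.sqrt Γ)
    (ε₀ : ℝ) (hε₀ : ε₀ = max ‖W₁ - V₁‖ ‖W₂ - V₂‖) :
    max ‖(ftStep η 0 Aft 0 1 (W₁, W₂)).1 - (ftStep η 0 Aft 0 1 (V₁, V₂)).1‖
        ‖(ftStep η 0 Aft 0 1 (W₁, W₂)).2 - (ftStep η 0 Aft 0 1 (V₁, V₂)).2‖
      ≤ (1 + 32 * η * Γ) * ε₀ := by
  have hΓpos : 0 < Γ := lt_of_lt_of_le (hσpos ⟨0, hd⟩) (hΓ ▸ le_max_left _ _)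
  have hsq : Real.sqrt Γ * Real.sqrt Γ = Γ := Real.mul_self_sqrt hΓpos.le
  have hsqnn : 0 ≤ Real.sqrt Γ := Real.sqrt_nonneg Γ
  have hεnn : 0 ≤ ε₀ := hε₀ ▸ le_trans (norm_nonneg _) (le_max_left _ _)
  have hE1 : ‖W₁ - V₁‖ ≤ ε₀ := hε₀ ▸ le_max_left _ _
  have hE2 : ‖W₂ - V₂‖ ≤ ε₀ := hε₀ ▸ le_max_right _ _
  have hE1t : ‖(W₁ - V₁)ᵀ‖ ≤ ε₀ := by rw [l2_transpose_norm_aux]; exact hE1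
  have hE2t : ‖(W₂ - V₂)ᵀ‖ ≤ ε₀ := by rw [l2_transpose_norm_aux]; exact hE2
  have hW₂t : ‖W₂ᵀ‖ ≤ 2 * Real.sqrt Γ := by rw [l2_transpose_norm_aux]; exact hW₂
  have hV₁t : ‖V₁ᵀ‖ ≤ 2 * Real.sqrt Γ := by rw [l2_transpose_norm_aux]; exact hV₁
  have hAftn : ‖Aft‖ ≤ Γ := by
    have hd1 : ‖Matrix.diagonal σft‖ ≤ Γ := by
      apply l2_norm_diag_le_aux _ _ hΓpos.le
      intro i
      rw [abs_of_pos (hσftpos i)]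
      exact le_trans (Finset.le_sup' σft (Finset.mem_univ i)) (hΓ ▸ le_max_right _ _)
    have hUn : ‖U‖ = 1 := l2_norm_orth_aux hd U hU'
    have hVn : ‖Vᵀ‖ = 1 := by
      rw [l2_transpose_norm_aux]; exact l2_norm_orth_aux hd V hV'
    calc ‖Aft‖ = ‖U * Matrix.diagonal σft * Vᵀ‖ := by rw [hAft]
    _ ≤ ‖U * Matrix.diagonal σft‖ * ‖Vᵀ‖ := Matrix.l2_opNorm_mul _ _
    _ ≤ (‖U‖ * ‖Matrix.diagonal σft‖) * ‖Vᵀ‖ :=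
        mul_le_mul_of_nonneg_right (Matrix.l2_opNorm_mul _ _) (norm_nonneg _)
    _ = ‖Matrix.diagonal σft‖ := by rw [hUn, hVn]; ring
    _ ≤ Γ := hd1
  apply max_le
  · have e1 : (ftStep η 0 Aft 0 1 (W₁, W₂)).1 - (ftStep η 0 Aft 0 1 (V₁, V₂)).1 =
        (W₁ - V₁) - (2 * η) • ((W₁ - V₁) * (W₂ * W₂ᵀ) + V₁ * ((W₂ - V₂) * W₂ᵀ)
          + (V₁ * V₂) * (W₂ - V₂)ᵀ - Aft * (W₂ - V₂)ᵀ) := by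
      simp only [ftStep, mul_zero, zero_smul, sub_zero, mul_one, Matrix.transpose_sub]
      rw [sub_sub_sub_comm, ← smul_sub]
      congr 1
      noncomm_ring
    rw [e1]
    apply comp_bound_aux η Γ ε₀ hη hΓpos hεnn _ _ _ _ _ hE1
    · have h1 : ‖W₂ * W₂ᵀ‖ ≤ (2 * Real.sqrt Γ) * (2 * Real.sqrt Γ) :=
        l2_mul_bound_aux _ _ _ _ hW₂ hW₂t (by positivity)
      have h2 := l2_mul_bound_aux _ _ _ _ hE1 h1 hεnn
      calc ‖(W₁ - V₁) * (W₂ * W₂ᵀ)‖ ≤ ε₀ * ((2 * Real.sqrt Γ) * (2 * Real.sqrt Γ)) := h2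
      _ = 4 * Γ * ε₀ := by linear_combination 4 * ε₀ * hsq
    · have h1 : ‖(W₂ - V₂) * W₂ᵀ‖ ≤ ε₀ * (2 * Real.sqrt Γ) :=
        l2_mul_bound_aux _ _ _ _ hE2 hW₂t hεnn
      have h2 := l2_mul_bound_aux _ _ _ _ hV₁ h1 (by positivity)
      calc ‖V₁ * ((W₂ - V₂) * W₂ᵀ)‖ ≤ (2 * Real.sqrt Γ) * (ε₀ * (2 * Real.sqrt Γ)) := h2
      _ = 4 * Γ * ε₀ := by linear_combination 4 * ε₀ * hsq
    · have h1 : ‖V₁ * V₂‖ ≤ (2 * Real.sqrt Γ) * (2 * Real.sqrt Γ) :=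
        l2_mul_bound_aux _ _ _ _ hV₁ hV₂ (by positivity)
      have h2 := l2_mul_bound_aux _ _ _ _ h1 hE2t (by positivity)
      calc ‖(V₁ * V₂) * (W₂ - V₂)ᵀ‖ ≤ ((2 * Real.sqrt Γ) * (2 * Real.sqrt Γ)) * ε₀ := h2
      _ = 4 * Γ * ε₀ := by linear_combination 4 * ε₀ * hsq
    · exact l2_mul_bound_aux _ _ _ _ hAftn hE2t hΓpos.le
  · have e2 : (ftStep η 0 Aft 0 1 (W₁, W₂)).2 - (ftStep η 0 Aft 0 1 (V₁, V₂)).2 =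
        (W₂ - V₂) - (2 * η) • ((W₁ - V₁)ᵀ * (W₁ * W₂) + V₁ᵀ * ((W₁ - V₁) * W₂)
          + (V₁ᵀ * V₁) * (W₂ - V₂) - (W₁ - V₁)ᵀ * Aft) := by
      simp only [ftStep, mul_zero, zero_smul, sub_zero, mul_one, Matrix.transpose_sub]
      rw [sub_sub_sub_comm, ← smul_sub]
      congr 1
      noncomm_ring
    rw [e2]
    apply comp_bound_aux η Γ ε₀ hη hΓpos hεnn _ _ _ _ _ hE2
    · have h1 : ‖W₁ * W₂‖ ≤ (2 * Real.sqrt Γ) * (2 * Real.sqrt Γ) :=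
        l2_mul_bound_aux _ _ _ _ hW₁ hW₂ (by positivity)
      have h2 := l2_mul_bound_aux _ _ _ _ hE1t h1 hεnn
      calc ‖(W₁ - V₁)ᵀ * (W₁ * W₂)‖ ≤ ε₀ * ((2 * Real.sqrt Γ) * (2 * Real.sqrt Γ)) := h2
      _ = 4 * Γ * ε₀ := by linear_combination 4 * ε₀ * hsq
    · have h1 : ‖(W₁ - V₁) * W₂‖ ≤ ε₀ * (2 * Real.sqrt Γ) :=
        l2_mul_bound_aux _ _ _ _ hE1 hW₂ hεnn
      have h2 := l2_mul_bound_aux _ _ _ _ hV₁t h1 (by positivity)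
      calc ‖V₁ᵀ * ((W₁ - V₁) * W₂)‖ ≤ (2 * Real.sqrt Γ) * (ε₀ * (2 * Real.sqrt Γ)) := h2
      _ = 4 * Γ * ε₀ := by linear_combination 4 * ε₀ * hsq
    · have h1 : ‖V₁ᵀ * V₁‖ ≤ (2 * Real.sqrt Γ) * (2 * Real.sqrt Γ) :=
        l2_mul_bound_aux _ _ _ _ hV₁t hV₁ (by positivity)
      have h2 := l2_mul_bound_aux _ _ _ _ h1 hE2 (by positivity)
      calc ‖(V₁ᵀ * V₁) * (W₂ - V₂)‖ ≤ ((2 * Real.sqrt Γ) * (2 * Real.sqrt Γ)) * ε₀ := h2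
      _ = 4 * Γ * ε₀ := by linear_combination 4 * ε₀ * hsq
    · have h2 := l2_mul_bound_aux _ _ _ _ hE1t hAftn hεnn
      calc ‖(W₁ - V₁)ᵀ * Aft‖ ≤ ε₀ * Γ := h2
      _ = Γ * ε₀ := by ring
end

section
/- Fix 1 ≤ n ≤ d and suppose σ^ft_n > 4·σ_n. Let m = min_{1≤i≤n}(σ_i − σ^ft_i)². Suppose θ, θ' ∈ ℝ^{d×d} satisfy |L_pre(θ) − L_pre(U·Σ^ft_{:n}·Vᵀ)| ≤ m/5 and |L_pre(θ') − L_pre(U·Σ^ft_{:n−1}·Vᵀ)| ≤ m/5. Then L_pre(θ) > L_pre(θ'): the pre-training loss after unregularized fine-tuning strictly increases from stage n−1 to stage n. -/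
open Matrix

/-- Squared Frobenius norm of a real matrix. -/
noncomputable def frobSq {d : ℕ} (M : Matrix (Fin d) (Fin d) ℝ) : ℝ :=
  ∑ i, ∑ j, (M i j) ^ 2

/-- The truncated diagonal matrix keeping the first `n` diagonal entries of `diagonal σ`. -/
noncomputable def truncDiag {d : ℕ} (σ : Fin d → ℝ) (n : ℕ) : Matrix (Fin d) (Fin d) ℝ :=
  Matrix.diagonal fun i => if (i : ℕ) < n then σ i else 0

/-- The diagonal matrix `M_n^λ` with entries `(σ^ft_i + λσ_i)/(1 + λ)` for `i ≤ n`, `0` else. -/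
noncomputable def Mreg {d : ℕ} (σ σft : Fin d → ℝ) (lam : ℝ) (n : ℕ) :
    Matrix (Fin d) (Fin d) ℝ :=
  Matrix.diagonal fun i => if (i : ℕ) < n then (σft i + lam * σ i) / (1 + lam) else 0

lemma frobSq_eq_trace {d : ℕ} (M : Matrix (Fin d) (Fin d) ℝ) :
    frobSq M = Matrix.trace (Mᵀ * M) := by
  simp [frobSq, Matrix.trace, Matrix.mul_apply, Matrix.diag, pow_two]
  rw [Finset.sum_comm]

lemma frobSq_conj {d : ℕ} (U V M : Matrix (Fin d) (Fin d) ℝ)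
    (hU' : Uᵀ * U = 1) (hV' : Vᵀ * V = 1) :
    frobSq (U * M * Vᵀ) = frobSq M := by
  rw [frobSq_eq_trace, frobSq_eq_trace]
  have h2 : (U * M * Vᵀ)ᵀ * (U * M * Vᵀ) = V * (Mᵀ * M) * Vᵀ := by
    have h1 : (U * M * Vᵀ)ᵀ * (U * M * Vᵀ) = V * Mᵀ * (Uᵀ * U) * M * Vᵀ := by
      simp only [Matrix.transpose_mul, Matrix.transpose_transpose]
      simp [Matrix.mul_assoc]
    rw [h1, hU']
    simp [Matrix.mul_assoc]
  rw [h2, Matrix.trace_mul_cycle, ← Matrix.mul_assoc, hV', Matrix.one_mul]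

lemma frobSq_diagonal {d : ℕ} (f : Fin d → ℝ) :
    frobSq (Matrix.diagonal f) = ∑ i, (f i) ^ 2 := by
  unfold frobSq
  refine Finset.sum_congr rfl fun i _ => ?_
  rw [Finset.sum_eq_single i]
  · simp
  · intro b _ hb; simp [Matrix.diagonal, Ne.symm hb]
  · simp

lemma loss_trunc {d : ℕ} (U V : Matrix (Fin d) (Fin d) ℝ)
    (hU' : Uᵀ * U = 1) (hV' : Vᵀ * V = 1) (σ σft : Fin d → ℝ) (k : ℕ) :
    frobSq (U * truncDiag σft k * Vᵀ - U * Matrix.diagonal σ * Vᵀ)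
      = ∑ i : Fin d, ((if (i : ℕ) < k then σft i else 0) - σ i) ^ 2 := by
  have h : U * truncDiag σft k * Vᵀ - U * Matrix.diagonal σ * Vᵀ
      = U * (Matrix.diagonal fun i : Fin d => (if (i : ℕ) < k then σft i else 0) - σ i) * Vᵀ := by
    rw [← Matrix.diagonal_sub]
    simp only [Matrix.mul_sub, Matrix.sub_mul, truncDiag]
  rw [h, frobSq_conj U V _ hU' hV', frobSq_diagonal]

/-- if `σ^ft_n > 4σ_n`, any model with pre-training loss close to that of the
stage-`n` unregularized fine-tuning limit has strictly larger pre-training loss than any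
model close to the stage-`(n−1)` limit. -/
theorem unregularized_loss_increases_at_stage {d : ℕ} (hd : 1 ≤ d)
    (U V : Matrix (Fin d) (Fin d) ℝ)
    (hU : U * Uᵀ = 1) (hU' : Uᵀ * U = 1) (hV : V * Vᵀ = 1) (hV' : Vᵀ * V = 1)
    (σ : Fin d → ℝ) (hσpos : ∀ i, 0 < σ i) (hσanti : StrictAnti σ)
    (σft : Fin d → ℝ) (hσftpos : ∀ i, 0 < σft i)
    (Apre : Matrix (Fin d) (Fin d) ℝ) (hApre : Apre = U * Matrix.diagonal σ * Vᵀ)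
    (n : ℕ) (hn1 : 1 ≤ n) (hnd : n ≤ d)
    (hmis : σft ⟨n - 1, by omega⟩ > 4 * σ ⟨n - 1, by omega⟩)
    (m : ℝ) (hm : m = sInf {x : ℝ | ∃ i : Fin d, (i : ℕ) < n ∧ x = (σ i - σft i) ^ 2})
    (θ θ' : Matrix (Fin d) (Fin d) ℝ)
    (hθ : |frobSq (θ - Apre) - frobSq (U * truncDiag σft n * Vᵀ - Apre)| ≤ m / 5)
    (hθ' : |frobSq (θ' - Apre) - frobSq (U * truncDiag σft (n - 1) * Vᵀ - Apre)| ≤ m / 5) :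
    frobSq (θ - Apre) > frobSq (θ' - Apre) := by
  set k : Fin d := ⟨n - 1, by omega⟩ with hk
  -- losses of the two truncated limits
  have Ln : frobSq (U * truncDiag σft n * Vᵀ - Apre)
      = ∑ i : Fin d, ((if (i : ℕ) < n then σft i else 0) - σ i) ^ 2 := by
    rw [hApre]; exact loss_trunc U V hU' hV' σ σft n
  have Ln1 : frobSq (U * truncDiag σft (n - 1) * Vᵀ - Apre)
      = ∑ i : Fin d, ((if (i : ℕ) < n - 1 then σft i else 0) - σ i) ^ 2 := by
    rw [hApre]; exact loss_trunc U V hU' hV' σ σft (n - 1)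
  -- the difference of the two losses
  have hdiff : frobSq (U * truncDiag σft n * Vᵀ - Apre)
      - frobSq (U * truncDiag σft (n - 1) * Vᵀ - Apre)
      = (σft k - σ k) ^ 2 - (σ k) ^ 2 := by
    rw [Ln, Ln1, ← Finset.sum_sub_distrib]
    rw [Finset.sum_eq_single k]
    · have h1 : (k : ℕ) < n := by simp [hk]; omega
      have h2 : ¬ ((k : ℕ) < n - 1) := by simp [hk]
      rw [if_pos h1, if_neg h2]
      ring
    · intro b _ hb
      have hbne : (b : ℕ) ≠ n - 1 := by
        intro h; exact hb (Fin.ext h)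
      by_cases hbn : (b : ℕ) < n - 1
      · rw [if_pos (by omega : (b:ℕ) < n), if_pos hbn]; ring
      · rw [if_neg (by omega : ¬ (b:ℕ) < n), if_neg hbn]; ring
    · simp
  -- properties of m
  set S : Set ℝ := {x : ℝ | ∃ i : Fin d, (i : ℕ) < n ∧ x = (σ i - σft i) ^ 2} with hS
  have hmem : (σ k - σft k) ^ 2 ∈ S := ⟨k, by simp [hk]; omega, rfl⟩
  have hbdd : BddBelow S := ⟨0, fun x ⟨i, _, hx⟩ => hx ▸ sq_nonneg _⟩
  have hmle : m ≤ (σ k - σft k) ^ 2 := hm ▸ csInf_le hbdd hmem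
  have hmnn : 0 ≤ m := hm ▸ le_csInf ⟨_, hmem⟩ (fun x ⟨i, _, hx⟩ => hx ▸ sq_nonneg _)
  -- key strict inequality
  have hkey : (σft k - σ k) ^ 2 - (σ k) ^ 2 > 2 * (m / 5) := by
    have ha := hσpos k
    nlinarith [sq_nonneg (σft k - 4 * σ k), sq_nonneg (σ k)]
  -- finish
  have h1 := abs_le.mp hθ
  have h2 := abs_le.mp hθ'
  linarith [h1.1, h2.2]
end
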